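/- Decomposition of closed substitutions: if Ψ is a parameter substitution with depth(Ψ) = n ≥ 1 and whose range contains no parameters, then there exist substitutions Φ₁ ∈ AllParSubst(dom(Ψ)) and Φ₂ with depth(Φ₂) = n − 1 such that Ψ = Φ₁ ∘ Φ₂. -/

import Mathlib

/-- Types over a type alphabet whose constructors are at most unary:
type parameters, nullary constructors and unary constructors. -/
inductive UTy (C : Type) where
  | param : ℕ → UTy C
  | con0 : C → UTy C
  | con1 : C → UTy C → UTy C
deriving DecidableEq

/-- The subtype relation on types (arguments are compared only up to the
minimum of the arities). -/
inductive USub {C : Type} [LE C] : UTy C → UTy C → Prop where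
  | param (n : ℕ) : USub (.param n) (.param n)
  | con00 {K L : C} : K ≤ L → USub (.con0 K) (.con0 L)
  | con01 {K L : C} {τ : UTy C} : K ≤ L → USub (.con0 K) (.con1 L τ)
  | con10 {K L : C} {σ : UTy C} : K ≤ L → USub (.con1 K σ) (.con0 L)
  | con11 {K L : C} {σ τ : UTy C} : K ≤ L → USub σ τ →
      USub (.con1 K σ) (.con1 L τ)

/-- Applying a parameter substitution to a type. -/
def UTy.subst {C : Type} (Φ : ℕ → UTy C) : UTy C → UTy C
  | .param n => Φ n
  | .con0 K => .con0 K
  | .con1 K σ => .con1 K (σ.subst Φ)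

/-- The list of type parameters of a type. -/
def UTy.params {C : Type} : UTy C → List ℕ
  | .param n => [n]
  | .con0 _ => []
  | .con1 _ σ => σ.params

/-- The depth of a type. -/
def UTy.depth {C : Type} : UTy C → ℕ
  | .param _ => 0
  | .con0 _ => 1
  | .con1 _ σ => 1 + σ.depth

/-- The domain of a parameter substitution. -/
def substDom {C : Type} (Φ : ℕ → UTy C) : Set ℕ := {n | Φ n ≠ .param n}

/-- `AllParSubst A` is the set of parameter substitutions `Φ` with
`dom(Φ) ⊆ A`, `depth(Φ) ≤ 1`, and `Par(αΦ) ⊆ {α}` but `αΦ ≠ α`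
for all `α ∈ A`. -/
def AllParSubst {C : Type} (A : Set ℕ) : Set (ℕ → UTy C) :=
  {Φ | substDom Φ ⊆ A ∧ (∀ m ∈ substDom Φ, (Φ m).depth ≤ 1) ∧
    ∀ a ∈ A, (∀ n ∈ (Φ a).params, n = a) ∧ Φ a ≠ .param a}

/-- A type inequation `σ ⪯ τ`. -/
abbrev UIneq (C : Type) := UTy C × UTy C

/-- A system of type inequations is solvable. -/
def USolvable {C : Type} [LE C] (I : Set (UIneq C)) : Prop :=
  ∃ Φ : ℕ → UTy C, ∀ p ∈ I, USub (p.1.subst Φ) (p.2.subst Φ)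

/-- The set of type parameters of a system of type inequations. -/
def sysParams {C : Type} (I : Set (UIneq C)) : Set ℕ :=
  {n | ∃ p ∈ I, n ∈ p.1.params ∨ n ∈ p.2.params}

/-- Applying a parameter substitution to a system of type inequations. -/
def applySys {C : Type} (Φ : ℕ → UTy C) (I : Set (UIneq C)) : Set (UIneq C) :=
  (fun p : UIneq C => (p.1.subst Φ, p.2.subst Φ)) '' I

/-! A closed type of positive depth is `K` or `K(τ)`; peeling off its head constructor, with the
parameter `n` left as a hole, gives a one-layer type, and the peeled-off argument `τ` is one layer
shallower. Doing this pointwise factors `Ψ` through a substitution that replaces each `n` by the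
head of `Ψ n`, followed by one that fills the hole `n` with the remaining argument. -/

namespace UTy

variable {C : Type}

def head (n : ℕ) : UTy C → UTy C
  | .param _ => .param n
  | .con0 K => .con0 K
  | .con1 K _ => .con1 K (.param n)

def tail (n : ℕ) : UTy C → UTy C
  | .con1 _ σ => σ
  | _ => .param n

theorem depth_eq_zero_iff {σ : UTy C} : σ.depth = 0 ↔ ∃ k, σ = .param k := by
  cases σ <;> simp [depth]

theorem depth_ne_zero_of_params_eq_nil {σ : UTy C} (h : σ.params = []) : σ.depth ≠ 0 := by
  rintro hσ
  obtain ⟨k, rfl⟩ := depth_eq_zero_iff.mp hσ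
  simp [params] at h

theorem depth_head_le_one (n : ℕ) (σ : UTy C) : (σ.head n).depth ≤ 1 := by
  cases σ <;> simp [head, depth]

theorem eq_of_mem_params_head {n k : ℕ} {σ : UTy C} (hk : k ∈ (σ.head n).params) : k = n := by
  cases σ <;> simp_all [head, params]

theorem head_ne_param {n : ℕ} {σ : UTy C} (hσ : σ.depth ≠ 0) : σ.head n ≠ .param n := by
  cases σ <;> simp_all [head, depth]

theorem depth_tail (n : ℕ) (σ : UTy C) : (σ.tail n).depth = σ.depth - 1 := by
  cases σ <;> simp [tail, depth]

theorem head_subst {n : ℕ} {σ : UTy C} {Φ : ℕ → UTy C} (hΦ : Φ n = σ.tail n)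
    (hσ : σ.depth = 0 → σ = .param n) : (σ.head n).subst Φ = σ := by
  cases σ with
  | param k => simpa [head, subst, hΦ, tail, depth] using (hσ rfl).symm
  | con0 K => rfl
  | con1 K τ => simp [head, subst, hΦ, tail]

end UTy

section Decomposition

variable {C : Type}

def headSubst (Ψ : ℕ → UTy C) (n : ℕ) : UTy C := (Ψ n).head n

def tailSubst (Ψ : ℕ → UTy C) (n : ℕ) : UTy C := (Ψ n).tail n

theorem eq_param_of_depth_eq_zero_of_closed {Ψ : ℕ → UTy C}
    (hclosed : ∀ m ∈ substDom Ψ, (Ψ m).params = []) (n : ℕ) (h : (Ψ n).depth = 0) :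
    Ψ n = .param n := by
  by_contra hn
  exact UTy.depth_ne_zero_of_params_eq_nil (hclosed n hn) h

theorem headSubst_mem_allParSubst {Ψ : ℕ → UTy C}
    (hΨ : ∀ n, (Ψ n).depth = 0 → Ψ n = .param n) :
    headSubst Ψ ∈ AllParSubst (substDom Ψ) := by
  have hdom : ∀ a ∈ substDom Ψ, (Ψ a).depth ≠ 0 := fun a ha h => ha (hΨ a h)
  refine ⟨fun n hn => ?_, fun m _ => UTy.depth_head_le_one m (Ψ m), fun a ha =>
    ⟨fun _ => UTy.eq_of_mem_params_head, UTy.head_ne_param (hdom a ha)⟩⟩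
  by_contra hΨn
  have hparam : Ψ n = .param n := not_not.mp hΨn
  exact hn (by simp [headSubst, hparam, UTy.head])

theorem substDom_tailSubst_subset (Ψ : ℕ → UTy C) : substDom (tailSubst Ψ) ⊆ substDom Ψ := by
  intro n hn hΨn
  exact hn (by simp [tailSubst, hΨn, UTy.tail])

theorem depth_tailSubst (Ψ : ℕ → UTy C) (n : ℕ) :
    (tailSubst Ψ n).depth = (Ψ n).depth - 1 :=
  UTy.depth_tail n (Ψ n)

theorem headSubst_subst_tailSubst {Ψ : ℕ → UTy C}
    (hΨ : ∀ n, (Ψ n).depth = 0 → Ψ n = .param n) (n : ℕ) :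
    (headSubst Ψ n).subst (tailSubst Ψ) = Ψ n :=
  UTy.head_subst rfl (hΨ n)

end Decomposition

theorem closed_subst_decomposition_general {C : Type} (Ψ : ℕ → UTy C) (d : ℕ)
    (hdepth_le : ∀ m ∈ substDom Ψ, (Ψ m).depth ≤ d)
    (hdepth_eq : ∃ m ∈ substDom Ψ, (Ψ m).depth = d)
    (hclosed : ∀ m ∈ substDom Ψ, (Ψ m).params = []) :
    ∃ (Φ₁ Φ₂ : ℕ → UTy C), Φ₁ ∈ AllParSubst (C := C) (substDom Ψ) ∧
      (∀ m ∈ substDom Φ₂, (Φ₂ m).depth ≤ d - 1) ∧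
      (d - 1 = 0 ∨ ∃ m ∈ substDom Φ₂, (Φ₂ m).depth = d - 1) ∧
      ∀ n, (Φ₁ n).subst Φ₂ = Ψ n := by
  have hΨ := eq_param_of_depth_eq_zero_of_closed hclosed
  refine ⟨headSubst Ψ, tailSubst Ψ, headSubst_mem_allParSubst hΨ, fun m hm => ?_, ?_,
    headSubst_subst_tailSubst hΨ⟩
  · rw [depth_tailSubst]
    exact Nat.sub_le_sub_right (hdepth_le m (substDom_tailSubst_subset Ψ hm)) 1
  · rcases Nat.eq_zero_or_pos (d - 1) with hd | hd
    · exact Or.inl hd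
    obtain ⟨m, -, hm⟩ := hdepth_eq
    have htail : (tailSubst Ψ m).depth = d - 1 := by rw [depth_tailSubst, hm]
    refine Or.inr ⟨m, fun hparam => ?_, htail⟩
    rw [hparam] at htail
    simp only [UTy.depth] at htail
    omega

/-- Decomposition of closed substitutions: if `Ψ` is a
parameter substitution of depth `d ≥ 1` whose range contains no parameters,
then there are `Φ₁ ∈ AllParSubst(dom Ψ)` and `Φ₂` of depth `d - 1` with
`Ψ = Φ₁ ∘ Φ₂`. -/
theorem closed_subst_decomposition {C : Type} (Ψ : ℕ → UTy C) (d : ℕ)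
    (hd1 : 1 ≤ d)
    (hdepth_le : ∀ m ∈ substDom Ψ, (Ψ m).depth ≤ d)
    (hdepth_eq : ∃ m ∈ substDom Ψ, (Ψ m).depth = d)
    (hclosed : ∀ m ∈ substDom Ψ, (Ψ m).params = []) :
    ∃ (Φ₁ Φ₂ : ℕ → UTy C), Φ₁ ∈ AllParSubst (C := C) (substDom Ψ) ∧
      (∀ m ∈ substDom Φ₂, (Φ₂ m).depth ≤ d - 1) ∧
      (d - 1 = 0 ∨ ∃ m ∈ substDom Φ₂, (Φ₂ m).depth = d - 1) ∧
      ∀ n, (Φ₁ n).subst Φ₂ = Ψ n :=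
  closed_subst_decomposition_general Ψ d hdepth_le hdepth_eq hclosed
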